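/- Let z_1,…,z_{n+1} and w_1,…,w_{n+1} be points on the unit circle satisfying ∏ w_j = −∏ z_j, with all z_j distinct. Then f(z) = ∏_{j=1}^{n+1}(1 − conj(w_j)z)/∏_{j=1}^{n+1}(1 − conj(z_j)z) satisfies conj(f(1/conj(z))) = −f(z); consequently f admits a partial fraction expansion f(z) = Σ_{j=1}^{n+1} c_j·(z_j + z)/(z_j − z) with all c_j real and Σ c_j = 1. -/

import Mathlib

/-!
For unimodular `a`, `1 - conj a * ζ = -conj a * (ζ - a)`; together with `∏ w = -∏ z` this turns
`f` into `-p/q` for the monic polynomials `p = ∏ (X - w_j)` and `q = ∏ (X - z_j)` of equal degree.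
Hence `p - q` has degree `≤ n`, and Lagrange interpolation at the distinct nodes `z_j` gives
`p/q = 1 + ∑ r_j / (ζ - z_j)`. Since `(z_j + ζ)/(z_j - ζ) = -1 + 2 z_j/(z_j - ζ)`, this is the
expansion with `c_j = r_j / (2 z_j)`, and `f 0 = 1` forces `∑ c_j = 1`. The reflection
`conj (b - a) = -conj (b a) * (b - a)` on the unit circle shows `conj c_j = c_j`, and the
symmetry of `f` comes from `1 - a/ζ = (ζ - a)/ζ`.
-/

open Finset Polynomial ComplexConjugate Lagrange

theorem Lagrange.eval_div_eval_nodal_of_monic {F ι : Type*} [Field F] [DecidableEq ι]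
    {s : Finset ι} {v : ι → F} (hvs : Set.InjOn v s) {p : F[X]} (hp : p.Monic)
    (hdeg : p.natDegree = #s) {x : F} (hx : ∀ i ∈ s, x ≠ v i) :
    p.eval x / (nodal s v).eval x =
      1 + ∑ i ∈ s, nodalWeight s v i * (x - v i)⁻¹ * p.eval (v i) := by
  have hlt : (p - nodal s v).degree < #s := by
    rw [← degree_nodal (s := s) (v := v)]
    refine degree_sub_lt_right ?_ nodal_ne_zero
      (by rw [hp.leadingCoeff, nodal_monic.leadingCoeff])
    rw [degree_nodal, degree_eq_natDegree hp.ne_zero, hdeg]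
  have hinterp := congrArg (eval x) (eq_interpolate hvs hlt)
  rw [eval_interpolate_not_at_node _ hx] at hinterp
  rw [div_eq_iff (eval_nodal_not_at_node hx)]
  have hnodes : ∀ i ∈ s, (p - nodal s v).eval (v i) = p.eval (v i) := fun i hi => by
    rw [eval_sub, eval_nodal_at_node hi, sub_zero]
  rw [sum_congr rfl fun i hi => by rw [hnodes i hi], eval_sub] at hinterp
  linear_combination hinterp

variable {ι : Type*}

namespace Complex

lemma ne_zero_of_norm_eq_one {a : ℂ} (ha : ‖a‖ = 1) : a ≠ 0 :=
  norm_ne_zero_iff.mp (ha.trans_ne one_ne_zero)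

lemma conj_mul_self_of_norm_eq_one {a : ℂ} (ha : ‖a‖ = 1) : conj a * a = 1 := by
  rw [conj_mul', ha]
  norm_num

lemma one_sub_conj_mul_eq {a : ℂ} (ha : ‖a‖ = 1) (ζ : ℂ) :
    1 - conj a * ζ = -conj a * (ζ - a) := by
  linear_combination -conj_mul_self_of_norm_eq_one ha

lemma conj_sub_of_norm_eq_one {a b : ℂ} (ha : ‖a‖ = 1) (hb : ‖b‖ = 1) :
    conj (b - a) = -(conj b * conj a) * (b - a) := by
  rw [map_sub]
  linear_combination
    conj a * conj_mul_self_of_norm_eq_one hb - conj b * conj_mul_self_of_norm_eq_one ha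

lemma conj_prod_sub_of_norm_eq_one {s : Finset ι} {a : ι → ℂ} (ha : ∀ k ∈ s, ‖a k‖ = 1) {b : ℂ}
    (hb : ‖b‖ = 1) :
    conj (∏ k ∈ s, (b - a k)) = (-conj b) ^ #s * conj (∏ k ∈ s, a k) * ∏ k ∈ s, (b - a k) := by
  rw [map_prod, prod_congr rfl fun k hk => conj_sub_of_norm_eq_one (ha k hk) hb, prod_mul_distrib,
    prod_neg, prod_mul_distrib, prod_const, map_prod, neg_pow (conj b)]
  ring

end Complex

open Complex

noncomputable section

variable [Fintype ι]

def quasiCaratheodoryFun (z w : ι → ℂ) (ζ : ℂ) : ℂ :=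
  (∏ j, (1 - conj (w j) * ζ)) / ∏ j, (1 - conj (z j) * ζ)

lemma quasiCaratheodoryFun_zero (z w : ι → ℂ) : quasiCaratheodoryFun z w 0 = 1 := by
  simp [quasiCaratheodoryFun]

lemma conj_quasiCaratheodoryFun_inv_conj_eq_div (z w : ι → ℂ) {ζ : ℂ} (hζ : ζ ≠ 0) :
    conj (quasiCaratheodoryFun z w (conj ζ)⁻¹) =
      (nodal univ w).eval ζ / (nodal univ z).eval ζ := by
  have hfactor : ∀ a : ℂ, conj (1 - conj a * (conj ζ)⁻¹) = ζ⁻¹ * (ζ - a) := fun a => by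
    simp only [map_sub, map_one, map_mul, map_inv₀, conj_conj]
    field_simp
  simp only [quasiCaratheodoryFun, map_div₀, map_prod, hfactor, prod_mul_distrib, eval_nodal]
  exact mul_div_mul_left _ _ (prod_ne_zero_iff.mpr fun _ _ => inv_ne_zero hζ)

variable {z w : ι → ℂ}

lemma quasiCaratheodoryFun_eq_neg_div_nodal (hz : ∀ j, ‖z j‖ = 1) (hw : ∀ j, ‖w j‖ = 1)
    (hprod : ∏ j, w j = -∏ j, z j) (ζ : ℂ) :
    quasiCaratheodoryFun z w ζ = -((nodal univ w).eval ζ / (nodal univ z).eval ζ) := by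
  have hlead : ∏ j, -conj (w j) = -∏ j, -conj (z j) := by
    rw [prod_neg, prod_neg, ← map_prod, ← map_prod, hprod, map_neg, mul_neg]
  have hlead_ne : ∏ j, -conj (z j) ≠ 0 :=
    prod_ne_zero_iff.mpr fun j _ => by simpa using ne_zero_of_norm_eq_one (hz j)
  simp only [quasiCaratheodoryFun, one_sub_conj_mul_eq (hz _), one_sub_conj_mul_eq (hw _),
    prod_mul_distrib, eval_nodal, hlead]
  rw [neg_mul, neg_div, mul_div_mul_left _ _ hlead_ne]

lemma conj_quasiCaratheodoryFun_inv_conj (hz : ∀ j, ‖z j‖ = 1) (hw : ∀ j, ‖w j‖ = 1)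
    (hprod : ∏ j, w j = -∏ j, z j) {ζ : ℂ} (hζ : ζ ≠ 0) :
    conj (quasiCaratheodoryFun z w (conj ζ)⁻¹) = -quasiCaratheodoryFun z w ζ := by
  rw [conj_quasiCaratheodoryFun_inv_conj_eq_div z w hζ,
    quasiCaratheodoryFun_eq_neg_div_nodal hz hw hprod, neg_neg]

variable [DecidableEq ι]

def quasiCaratheodoryCoeff (z w : ι → ℂ) (j : ι) : ℂ :=
  nodalWeight univ z j * (nodal univ w).eval (z j) / (2 * z j)

lemma quasiCaratheodoryFun_eq_neg_one_sub_sum (hz : ∀ j, ‖z j‖ = 1) (hw : ∀ j, ‖w j‖ = 1)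
    (hzinj : Function.Injective z) (hprod : ∏ j, w j = -∏ j, z j) {ζ : ℂ} (hζ : ∀ j, ζ ≠ z j) :
    quasiCaratheodoryFun z w ζ =
      -1 - ∑ j, 2 * z j * quasiCaratheodoryCoeff z w j * (ζ - z j)⁻¹ := by
  rw [quasiCaratheodoryFun_eq_neg_div_nodal hz hw hprod,
    eval_div_eval_nodal_of_monic hzinj.injOn nodal_monic natDegree_nodal fun j _ => hζ j, neg_add']
  refine congrArg _ (sum_congr rfl fun j _ => ?_)
  have := ne_zero_of_norm_eq_one (hz j)
  have := sub_ne_zero.mpr (hζ j)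
  rw [quasiCaratheodoryCoeff]
  field_simp

lemma sum_quasiCaratheodoryCoeff (hz : ∀ j, ‖z j‖ = 1) (hw : ∀ j, ‖w j‖ = 1)
    (hzinj : Function.Injective z) (hprod : ∏ j, w j = -∏ j, z j) :
    ∑ j, quasiCaratheodoryCoeff z w j = 1 := by
  have h0 := quasiCaratheodoryFun_eq_neg_one_sub_sum hz hw hzinj hprod (ζ := 0)
    fun j h => by simpa [← h] using hz j
  have hterm : ∀ j, 2 * z j * quasiCaratheodoryCoeff z w j * (0 - z j)⁻¹ =
      -2 * quasiCaratheodoryCoeff z w j := fun j => by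
    have := ne_zero_of_norm_eq_one (hz j)
    field_simp
    ring
  rw [quasiCaratheodoryFun_zero, sum_congr rfl fun j _ => hterm j, ← mul_sum] at h0
  linear_combination -h0 / 2

lemma conj_quasiCaratheodoryCoeff (hz : ∀ j, ‖z j‖ = 1) (hw : ∀ j, ‖w j‖ = 1)
    (hprod : ∏ j, w j = -∏ j, z j) (j : ι) :
    conj (quasiCaratheodoryCoeff z w j) = quasiCaratheodoryCoeff z w j := by
  simp only [quasiCaratheodoryCoeff, nodalWeight, eval_nodal, prod_inv_distrib]
  rw [map_div₀, map_mul, map_inv₀, conj_prod_sub_of_norm_eq_one (fun k _ => hz k) (hz j),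
    conj_prod_sub_of_norm_eq_one (fun k _ => hw k) (hz j), hprod,
    ← mul_prod_erase univ z (mem_univ j)]
  have hP : conj (∏ k ∈ univ.erase j, z k) ≠ 0 := (_root_.map_ne_zero _).mpr <|
    prod_ne_zero_iff.mpr fun k _ => ne_zero_of_norm_eq_one (hz k)
  have hc := conj_mul_self_of_norm_eq_one (hz j)
  have hc0 : conj (z j) ≠ 0 := left_ne_zero_of_mul_eq_one hc
  have hz0 : z j ≠ 0 := right_ne_zero_of_mul_eq_one hc
  rw [← card_erase_add_one (mem_univ j), pow_succ]
  simp only [map_neg, map_mul, map_ofNat, mul_inv]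
  have hq : (-conj (z j)) ^ #(univ.erase j) ≠ 0 := pow_ne_zero _ (neg_ne_zero.mpr hc0)
  generalize (∏ k ∈ univ.erase j, (z j - z k))⁻¹ = d
  generalize (-conj (z j)) ^ #(univ.erase j) = q at hq ⊢
  generalize conj (∏ k ∈ univ.erase j, z k) = P at hP ⊢
  generalize conj (z j) = c at hc hc0 ⊢
  field_simp
  linear_combination (d * ∏ k, (z j - w k)) * hc

lemma quasiCaratheodoryFun_eq_sum (hz : ∀ j, ‖z j‖ = 1) (hw : ∀ j, ‖w j‖ = 1)
    (hzinj : Function.Injective z) (hprod : ∏ j, w j = -∏ j, z j) {ζ : ℂ} (hζ : ∀ j, ζ ≠ z j) :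
    quasiCaratheodoryFun z w ζ = ∑ j, quasiCaratheodoryCoeff z w j * (z j + ζ) / (z j - ζ) := by
  rw [quasiCaratheodoryFun_eq_neg_one_sub_sum hz hw hzinj hprod hζ,
    ← sum_quasiCaratheodoryCoeff hz hw hzinj hprod, ← sum_neg_distrib, ← sum_sub_distrib]
  refine sum_congr rfl fun j _ => ?_
  have := sub_ne_zero.mpr (hζ j)
  have := sub_ne_zero.mpr (hζ j).symm
  field_simp
  ring

end

/-- For points `z_j, w_j` on the unit circle with `∏ w_j = −∏ z_j` and the `z_j` distinct,
the rational function `f(z) = ∏(1 − conj(w_j)z)/∏(1 − conj(z_j)z)` satisfies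
`conj(f(1/conj z)) = −f(z)`, and admits a partial fraction expansion
`f(z) = Σ c_j (z_j + z)/(z_j − z)` with real `c_j` summing to `1`. -/
theorem quasi_caratheodory
    (n : ℕ) (z w : Fin (n + 1) → ℂ)
    (hz : ∀ j, ‖z j‖ = 1) (hw : ∀ j, ‖w j‖ = 1)
    (hzinj : Function.Injective z)
    (hprod : ∏ j, w j = -∏ j, z j) :
    (∀ ζ : ℂ, ζ ≠ 0 → (∀ j, ζ ≠ z j) →
      (starRingEnd ℂ)
          ((∏ j, (1 - (starRingEnd ℂ) (w j) * ((starRingEnd ℂ) ζ)⁻¹))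
            / ∏ j, (1 - (starRingEnd ℂ) (z j) * ((starRingEnd ℂ) ζ)⁻¹))
        = -((∏ j, (1 - (starRingEnd ℂ) (w j) * ζ)) / ∏ j, (1 - (starRingEnd ℂ) (z j) * ζ))) ∧
    (∃ c : Fin (n + 1) → ℝ, (∑ j, c j) = 1 ∧
      ∀ ζ : ℂ, (∀ j, ζ ≠ z j) →
        (∏ j, (1 - (starRingEnd ℂ) (w j) * ζ)) / ∏ j, (1 - (starRingEnd ℂ) (z j) * ζ)
          = ∑ j, (c j : ℂ) * (z j + ζ) / (z j - ζ)) := by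
  have hreal : ∀ j, ((quasiCaratheodoryCoeff z w j).re : ℂ) = quasiCaratheodoryCoeff z w j :=
    fun j => conj_eq_iff_re.mp (conj_quasiCaratheodoryCoeff hz hw hprod j)
  refine ⟨fun ζ hζ _ => conj_quasiCaratheodoryFun_inv_conj hz hw hprod hζ,
    fun j => (quasiCaratheodoryCoeff z w j).re, ?_, fun ζ hζ => ?_⟩
  · apply ofReal_injective
    push_cast [hreal]
    exact sum_quasiCaratheodoryCoeff hz hw hzinj hprod
  · simp only [hreal]
    exact quasiCaratheodoryFun_eq_sum hz hw hzinj hprod hζ
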